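/- Suppose 𝒫 is regular-sparse with respect to A, and let (ψ_1,...,ψ_K) and (g_1,...,g_K) be two sets of intrinsic sparse modes of A. Partition the index set {1,...,K} into groups Q_1,...,Q_Q such that ψ_k and ψ_{k'} are unidentifiable on 𝒫 whenever k and k' lie in the same group, and identifiable whenever they lie in different groups; let n_q = |Q_q|. Then there exist a bijection σ of {1,...,K} and orthogonal matrices U_q ∈ O(n_q), q = 1,...,Q, such that for each q the matrix whose columns are (g_{σ(k)})_{k∈Q_q} equals the matrix whose columns are (ψ_k)_{k∈Q_q} multiplied on the right by U_q. In particular, the intrinsic sparse modes of A are unique up to permutations and orthogonal transformations within groups of unidentifiable modes. -/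

import Mathlib

open Matrix BigOperators

/-- Restriction of a vector `ψ ∈ ℝ^N` to the indices in a patch `Pm`. -/
def restrictPatch {N : ℕ} (Pm : Finset (Fin N)) (ψ : Fin N → ℝ) : ↥Pm → ℝ :=
  fun i => ψ i

/-- Patch-wise sparseness `s(ψ;𝒫)`: the number of patches on which `ψ` is nonzero. -/
noncomputable def sparseness {N M : ℕ} (P : Fin M → Finset (Fin N)) (ψ : Fin N → ℝ) : ℕ :=
  {m : Fin M | restrictPatch (P m) ψ ≠ 0}.ncard

/-- `P` is a partition of `{1,...,N}` into disjoint nonempty patches. -/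
def IsPartition {N M : ℕ} (P : Fin M → Finset (Fin N)) : Prop :=
  (∀ m, (P m).Nonempty) ∧ (∀ m m', m ≠ m' → Disjoint (P m) (P m')) ∧ (∀ i, ∃ m, i ∈ P m)

/-- `K_m`: the rank of the principal submatrix `A_mm`. -/
noncomputable def patchRank {N : ℕ} (A : Matrix (Fin N) (Fin N) ℝ) (Pm : Finset (Fin N)) : ℕ :=
  (A.submatrix (fun i : ↥Pm => (i : Fin N)) (fun i : ↥Pm => (i : Fin N))).rank

/-- The partition `P` is regular-sparse w.r.t. `A`. -/
def RegularSparse {N M : ℕ} (K : ℕ) (A : Matrix (Fin N) (Fin N) ℝ)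
    (P : Fin M → Finset (Fin N)) : Prop :=
  ∃ g : Fin K → Fin N → ℝ,
    A = ∑ k, vecMulVec (g k) (g k) ∧
    ∀ m, LinearIndependent ℝ
      (fun k : {k : Fin K // restrictPatch (P m) (g k) ≠ 0} =>
        restrictPatch (P m) (g (k : Fin K)))

/-- `(ψ_1,...,ψ_K)` is a set of intrinsic sparse modes of `A` w.r.t. the partition `P`. -/
def IsISM {N M K : ℕ} (A : Matrix (Fin N) (Fin N) ℝ) (P : Fin M → Finset (Fin N))
    (ψ : Fin K → Fin N → ℝ) : Prop :=
  A = ∑ k, vecMulVec (ψ k) (ψ k) ∧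
  ∀ φ : Fin K → Fin N → ℝ, A = ∑ k, vecMulVec (φ k) (φ k) →
    ∑ k, sparseness P (ψ k) ≤ ∑ k, sparseness P (φ k)

/-- Two modes are unidentifiable on partition `P`: supported on exactly the same patches. -/
def Unidentifiable {N M : ℕ} (P : Fin M → Finset (Fin N)) (g g' : Fin N → ℝ) : Prop :=
  ∀ m, restrictPatch (P m) g ≠ 0 ↔ restrictPatch (P m) g' ≠ 0

/-- The block diagonal matrix `H_ext = diag(H_1, ..., H_M)`. -/
def Hext {N M : ℕ} (P : Fin M → Finset (Fin N)) (Km : Fin M → ℕ)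
    (H : ∀ m, Matrix ↥(P m) (Fin (Km m)) ℝ) :
    Matrix (Fin N) ((m : Fin M) × Fin (Km m)) ℝ :=
  Matrix.of fun i c => if h : i ∈ P c.1 then H c.1 ⟨i, h⟩ c.2 else 0

/-- The `(m,n)` block `Λ_mn` of a matrix indexed by `Σ m, Fin (Km m)`. -/
def ΛBlock {M : ℕ} {Km : Fin M → ℕ}
    (Λ : Matrix ((m : Fin M) × Fin (Km m)) ((m : Fin M) × Fin (Km m)) ℝ) (m n : Fin M) :
    Matrix (Fin (Km m)) (Fin (Km n)) ℝ :=
  Matrix.of fun i j => Λ ⟨m, i⟩ ⟨n, j⟩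

/-- Joint diagonalization objective: sum of squares of off-diagonal entries of `Vᵀ S_n V`. -/
noncomputable def offDiagObj {n M : ℕ} (S : Fin M → Matrix (Fin n) (Fin n) ℝ)
    (V : Matrix (Fin n) (Fin n) ℝ) : ℝ :=
  ∑ p, ∑ i, ∑ j, if i ≠ j then ((Vᵀ * S p * V) i j) ^ 2 else 0

/-!
Write both decompositions as `A = ΨᵀΨ = GᵀG`. Since `rank A = K`, the rows of `Ψ` are independent
and `G = TΨ` with `T` orthogonal. Any decomposition has at least `rank A_mm` modes alive on patch
`m`, and a regular-sparse decomposition attains all these bounds, so an intrinsic sparse one does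
too: its restrictions to each patch are independent. Hence `T_jk ≠ 0` makes `g_j` and `ψ_k`
unidentifiable, so every row of `T` lives in a single group. Between the rows assigned to a group
and the columns of that group, `T` has orthonormal rows and orthonormal columns, so this block is
square; this gives `σ`, and the blocks are the `U_q`.
-/

open Submodule Module

theorem Submodule.span_range_subtype_ne_zero {R V ι : Type*} [Semiring R] [AddCommMonoid V]
    [Module R V] (v : ι → V) :
    span R (Set.range fun k : {k // v k ≠ 0} => v k) = span R (Set.range v) := by
  rw [← span_sdiff_singleton_zero (s := Set.range v)]
  congr 1
  ext x
  constructor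
  · rintro ⟨⟨k, hk⟩, rfl⟩
    exact ⟨⟨k, rfl⟩, hk⟩
  · rintro ⟨⟨k, rfl⟩, hk⟩
    exact ⟨⟨k, hk⟩, rfl⟩

theorem coeff_eq_zero_of_sum_smul_eq_zero {R V ι : Type*} [Ring R] [AddCommGroup V] [Module R V]
    [Fintype ι] {w : ι → V} (hw : LinearIndependent R fun k : {k // w k ≠ 0} => w k)
    {c : ι → R} (h : ∑ k, c k • w k = 0) {k : ι} (hk : w k ≠ 0) : c k = 0 := by
  classical
  refine Fintype.linearIndependent_iff.mp hw (fun k => c k) (Eq.trans ?_ h) ⟨k, hk⟩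
  refine Fintype.sum_of_injective _ Subtype.val_injective _ _ (fun j hj => ?_) fun _ => rfl
  rw [not_ne_iff.mp fun hj' => hj ⟨⟨j, hj'⟩, rfl⟩, smul_zero]

theorem Matrix.sum_vecMulVec_self_eq_transpose_mul {R ι n : Type*} [CommSemiring R] [Fintype ι]
    (v : ι → n → R) : ∑ k, vecMulVec (v k) (v k) = (of v)ᵀ * of v := by
  ext i j
  simp [Matrix.sum_apply, vecMulVec_apply, mul_apply]

theorem Matrix.mul_right_cancel_of_linearIndependent_row {R ι n l : Type*} [Semiring R]
    [Fintype ι] {Ψ : Matrix ι n R} (hΨ : LinearIndependent R Ψ.row) {X Y : Matrix l ι R}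
    (h : X * Ψ = Y * Ψ) : X = Y := by
  funext i
  refine vecMul_injective_iff.mpr hΨ ?_
  simpa only [mul_apply_eq_vecMul] using congrFun h i

theorem Matrix.eq_of_transpose_mul_mul_eq {R ι n : Type*} [CommSemiring R] [Fintype ι]
    {Ψ : Matrix ι n R} (hΨ : LinearIndependent R Ψ.row) {X Y : Matrix ι ι R}
    (h : Ψᵀ * X * Ψ = Ψᵀ * Y * Ψ) : X = Y := by
  have h' : Xᵀ * Ψ = Yᵀ * Ψ := by
    simpa only [transpose_mul, transpose_transpose] using
      congrArg transpose (mul_right_cancel_of_linearIndependent_row hΨ h)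
  simpa only [transpose_transpose] using
    congrArg transpose (mul_right_cancel_of_linearIndependent_row hΨ h')

section Gram

variable {R ι n : Type*} [Field R] [LinearOrder R] [IsStrictOrderedRing R] [Fintype ι] [Fintype n]

theorem rank_sum_vecMulVec_self (v : ι → n → R) :
    (∑ k, vecMulVec (v k) (v k)).rank = finrank R (span R (Set.range v)) := by
  rw [sum_vecMulVec_self_eq_transpose_mul, rank_transpose_mul_self, rank_eq_finrank_span_row]
  rfl

theorem range_mulVecLin_sum_vecMulVec_self (v : ι → n → R) :
    LinearMap.range (∑ k, vecMulVec (v k) (v k)).mulVecLin = span R (Set.range v) := by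
  refine eq_of_le_of_finrank_eq ?_ (rank_sum_vecMulVec_self v)
  rw [sum_vecMulVec_self_eq_transpose_mul, mulVecLin_mul]
  refine (LinearMap.range_comp_le_range _ _).trans ?_
  rw [range_mulVecLin]
  rfl

theorem linearIndependent_of_rank_sum_vecMulVec_self (v : ι → n → R)
    (h : (∑ k, vecMulVec (v k) (v k)).rank = Fintype.card ι) : LinearIndependent R v := by
  rw [linearIndependent_iff_card_eq_finrank_span, ← h, rank_sum_vecMulVec_self]
  rfl

theorem exists_mul_transpose_eq_one_of_sum_vecMulVec_eq [DecidableEq ι] {ψ g : ι → n → R}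
    (hψ : LinearIndependent R ψ)
    (h : ∑ k, vecMulVec (g k) (g k) = ∑ k, vecMulVec (ψ k) (ψ k)) :
    ∃ T : Matrix ι ι R, T * Tᵀ = 1 ∧ of g = T * of ψ := by
  have hspan : ∀ j, g j ∈ span R (Set.range ψ) := fun j => by
    rw [← range_mulVecLin_sum_vecMulVec_self, ← h, range_mulVecLin_sum_vecMulVec_self]
    exact subset_span ⟨j, rfl⟩
  choose T hT using fun j => (mem_span_range_iff_exists_fun R).mp (hspan j)
  have hgT : of g = of T * of ψ := by
    ext j i
    simp [mul_apply, ← hT j, Finset.sum_apply]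
  refine ⟨of T, mul_eq_one_comm.mp (eq_of_transpose_mul_mul_eq hψ ?_), hgT⟩
  calc (of ψ)ᵀ * ((of T)ᵀ * of T) * of ψ = (of g)ᵀ * of g := by
        simp only [hgT, transpose_mul, Matrix.mul_assoc]
    _ = (of ψ)ᵀ * of ψ := by simp only [← sum_vecMulVec_self_eq_transpose_mul, h]
    _ = (of ψ)ᵀ * (1 : Matrix ι ι R) * of ψ := by rw [Matrix.mul_one]

end Gram

section Blocks

variable {R ι ι' κ : Type*} [CommRing R] [Fintype ι']

theorem Matrix.submatrix_mul_transpose_of_row_support_subset {α S : Type*} [Fintype S]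
    (T : Matrix ι ι' R) (e : α → ι) {f : S → ι'} (hf : Function.Injective f)
    (h : ∀ a j, T (e a) j ≠ 0 → j ∈ Set.range f) :
    T.submatrix e f * (T.submatrix e f)ᵀ = (T * Tᵀ).submatrix e e := by
  refine Matrix.ext fun a b => ?_
  rw [mul_apply, submatrix_apply, mul_apply]
  refine Fintype.sum_of_injective f hf _ _ (fun j hj => ?_) fun _ => rfl
  rw [not_ne_iff.mp (mt (h a j) hj), zero_mul]

theorem Matrix.mul_apply_eq_sum_of_row_support {n : Type*} {s : Finset ι'} {T : Matrix ι ι' R}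
    (Ψ : Matrix ι' n R) {j : ι} (h : ∀ k, T j k ≠ 0 → k ∈ s) (i : n) :
    (T * Ψ) j i = ∑ k : s, T j k * Ψ k i := by
  rw [mul_apply]
  refine (Fintype.sum_of_injective Subtype.val Subtype.val_injective _ (fun k => T j k * Ψ k i)
    (fun k hk => ?_) fun _ => rfl).symm
  rw [not_ne_iff.mp fun h' => hk ⟨⟨k, h k h'⟩, rfl⟩, zero_mul]

theorem Matrix.submatrix_orthogonal_of_row_support [DecidableEq ι] [DecidableEq ι']
    {s : Finset ι'} {T : Matrix ι ι' R} (hT : T * Tᵀ = 1) {e : s → ι}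
    (he : Function.Injective e) (h : ∀ a j, T (e a) j ≠ 0 → j ∈ s) :
    T.submatrix e ((↑) : s → ι') * (T.submatrix e ((↑) : s → ι'))ᵀ = 1 ∧
      (T.submatrix e ((↑) : s → ι'))ᵀ * T.submatrix e ((↑) : s → ι') = 1 := by
  have hB := submatrix_mul_transpose_of_row_support_subset T e Subtype.val_injective
    fun a j hj => ⟨⟨j, h a j hj⟩, rfl⟩
  rw [hT, submatrix_one e he] at hB
  exact ⟨hB, mul_eq_one_comm.mp hB⟩

variable [Nontrivial R] [Fintype ι] [DecidableEq ι] [DecidableEq κ]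

theorem card_fiber_le_of_mul_transpose_eq_one {T : Matrix ι ι' R} (hT : T * Tᵀ = 1)
    {r : ι → κ} {s : ι' → κ} (hrs : ∀ i j, T i j ≠ 0 → r i = s j) (q : κ) :
    Fintype.card {i // r i = q} ≤ Fintype.card {j // s j = q} := by
  set B := T.submatrix (Subtype.val : {i // r i = q} → ι) (Subtype.val : {j // s j = q} → ι')
  have hB : B * Bᵀ = 1 := by
    rw [submatrix_mul_transpose_of_row_support_subset T _ Subtype.val_injective
      fun (i : {i // r i = q}) j hij => ⟨⟨j, (hrs i j hij).symm.trans i.2⟩, rfl⟩, hT,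
      submatrix_one _ Subtype.val_injective]
  have := (rank_mul_le_left B Bᵀ).trans (rank_le_card_width B)
  rwa [hB, rank_one] at this

theorem Matrix.exists_perm_rows_supported_on_fibers {T : Matrix ι ι R} (hT : T * Tᵀ = 1)
    (c : ι → κ) (hblock : ∀ j k k', T j k ≠ 0 → T j k' ≠ 0 → c k = c k') :
    ∃ σ : Equiv.Perm ι, ∀ k k', T (σ k) k' ≠ 0 → c k' = c k := by
  have hrow : ∀ j, ∃ k, T j k ≠ 0 := by
    intro j
    by_contra! h
    simpa [mul_apply, h] using congrFun (congrFun hT j) j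
  choose pivot hpivot using hrow
  have hrowc : ∀ j k, T j k ≠ 0 → c (pivot j) = c k := fun j k h => hblock j _ _ (hpivot j) h
  have hTt : Tᵀ * Tᵀᵀ = 1 := by rw [transpose_transpose]; exact mul_eq_one_comm.mp hT
  have hcard : ∀ q, Fintype.card {k // c k = q} = Fintype.card {j // c (pivot j) = q} :=
    fun q => le_antisymm
      (card_fiber_le_of_mul_transpose_eq_one hTt (fun k j h => (hrowc j k h).symm) q)
      (card_fiber_le_of_mul_transpose_eq_one hT hrowc q)
  let σ : Equiv.Perm ι := Equiv.ofFiberEquiv fun q => Fintype.equivOfCardEq (hcard q)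
  exact ⟨σ, fun k k' h =>
    (hrowc _ k' h).symm.trans (Equiv.ofFiberEquiv_map (g := c ∘ pivot) _ k)⟩

end Blocks

section Patch

variable {N M : ℕ} {ι : Type*} [Fintype ι] (P : Fin M → Finset (Fin N))

def PatchIndependent (φ : ι → Fin N → ℝ) : Prop :=
  ∀ m, LinearIndependent ℝ
    (fun k : {k // restrictPatch (P m) (φ k) ≠ 0} => restrictPatch (P m) (φ k))

open Classical in
noncomputable def patchSupport (m : Fin M) (φ : ι → Fin N → ℝ) : Finset ι :=
  {k | restrictPatch (P m) (φ k) ≠ 0}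

theorem sum_sparseness_eq_sum_card_patchSupport (φ : ι → Fin N → ℝ) :
    ∑ k, sparseness P (φ k) = ∑ m, (patchSupport P m φ).card := by
  simp only [sparseness, patchSupport, Set.ncard_eq_toFinset_card', Set.toFinset_ofPred,
    Finset.card_filter]
  exact Finset.sum_comm

theorem restrictPatch_sum_smul (Pm : Finset (Fin N)) (c : ι → ℝ) (φ : ι → Fin N → ℝ) :
    restrictPatch Pm (∑ k, c k • φ k) = ∑ k, c k • restrictPatch Pm (φ k) := by
  ext i
  simp [restrictPatch, Finset.sum_apply]

variable {P} {A : Matrix (Fin N) (Fin N) ℝ}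

theorem finrank_span_restrictPatch_eq_patchRank {φ : ι → Fin N → ℝ}
    (hA : A = ∑ k, vecMulVec (φ k) (φ k)) (m : Fin M) :
    Set.finrank ℝ (Set.range fun k : {k // restrictPatch (P m) (φ k) ≠ 0} =>
      restrictPatch (P m) (φ k)) = patchRank A (P m) := by
  rw [Set.finrank, span_range_subtype_ne_zero, patchRank, ← rank_sum_vecMulVec_self, hA]
  congr 1
  ext i j
  simp [restrictPatch, Matrix.sum_apply, vecMulVec_apply]

theorem patchRank_le_card_patchSupport {φ : ι → Fin N → ℝ}
    (hA : A = ∑ k, vecMulVec (φ k) (φ k)) (m : Fin M) :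
    patchRank A (P m) ≤ (patchSupport P m φ).card := by
  rw [← finrank_span_restrictPatch_eq_patchRank hA, patchSupport, ← Fintype.card_subtype]
  exact finrank_range_le_card _

theorem linearIndependent_restrictPatch_iff_card_patchSupport_eq {φ : ι → Fin N → ℝ}
    (hA : A = ∑ k, vecMulVec (φ k) (φ k)) (m : Fin M) :
    LinearIndependent ℝ (fun k : {k // restrictPatch (P m) (φ k) ≠ 0} =>
      restrictPatch (P m) (φ k)) ↔ (patchSupport P m φ).card = patchRank A (P m) := by
  rw [linearIndependent_iff_card_eq_finrank_span, finrank_span_restrictPatch_eq_patchRank hA,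
    patchSupport, Fintype.card_subtype]

theorem IsISM.patchIndependent {K : ℕ} {ψ : Fin K → Fin N → ℝ} (hreg : RegularSparse K A P)
    (hψ : IsISM A P ψ) : PatchIndependent P ψ := by
  obtain ⟨g, hAg, hg⟩ := hreg
  have hle : ∀ m ∈ Finset.univ, patchRank A (P m) ≤ (patchSupport P m ψ).card :=
    fun m _ => patchRank_le_card_patchSupport hψ.1 m
  have hsum : ∑ m, patchRank A (P m) = ∑ m, (patchSupport P m ψ).card := by
    refine le_antisymm (Finset.sum_le_sum hle) ?_
    calc ∑ m, (patchSupport P m ψ).card = ∑ k, sparseness P (ψ k) :=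
          (sum_sparseness_eq_sum_card_patchSupport P ψ).symm
      _ ≤ ∑ k, sparseness P (g k) := hψ.2 g hAg
      _ = ∑ m, (patchSupport P m g).card := sum_sparseness_eq_sum_card_patchSupport P g
      _ = ∑ m, patchRank A (P m) := Finset.sum_congr rfl fun m _ =>
          (linearIndependent_restrictPatch_iff_card_patchSupport_eq hAg m).mp (hg m)
  exact fun m => (linearIndependent_restrictPatch_iff_card_patchSupport_eq hψ.1 m).mpr
    ((Finset.sum_eq_sum_iff_of_le hle).mp hsum m (Finset.mem_univ m)).symm

theorem PatchIndependent.restrictPatch_sum_smul_ne_zero {φ : ι → Fin N → ℝ}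
    (hφ : PatchIndependent P φ) {c : ι → ℝ} {k : ι} {m : Fin M} (hc : c k ≠ 0)
    (hk : restrictPatch (P m) (φ k) ≠ 0) : restrictPatch (P m) (∑ k, c k • φ k) ≠ 0 :=
  fun h => hc (coeff_eq_zero_of_sum_smul_eq_zero (hφ m) (by rwa [← restrictPatch_sum_smul]) hk)

theorem PatchIndependent.unidentifiable_of_ne_zero {ψ g : ι → Fin N → ℝ}
    (hψ : PatchIndependent P ψ) (hg : PatchIndependent P g) {T : Matrix ι ι ℝ}
    (hgψ : of g = T * of ψ) (hψg : of ψ = Tᵀ * of g) {j k : ι} (hT : T j k ≠ 0) :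
    Unidentifiable P (g j) (ψ k) := by
  have hgj : g j = ∑ k, T j k • ψ k := by
    ext i
    simpa [mul_apply, Finset.sum_apply] using congrFun (congrFun hgψ j) i
  have hψk : ψ k = ∑ j, T j k • g j := by
    ext i
    simpa [mul_apply, Finset.sum_apply] using congrFun (congrFun hψg k) i
  exact fun m => ⟨fun h => hψk ▸ hg.restrictPatch_sum_smul_ne_zero hT h,
    fun h => hgj ▸ hψ.restrictPatch_sum_smul_ne_zero hT h⟩

end Patch

theorem ism_unique_up_to_rotations_of_unidentifiable_groups_general
    {N M K : ℕ} (A : Matrix (Fin N) (Fin N) ℝ)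
    (hrank : A.rank = K)
    (P : Fin M → Finset (Fin N))
    (hreg : RegularSparse K A P)
    (ψ : Fin K → Fin N → ℝ) (hψ : IsISM A P ψ)
    (g : Fin K → Fin N → ℝ) (hg : IsISM A P g)
    (Qn : ℕ) (Q : Fin Qn → Finset (Fin K))
    (hQdisj : ∀ q q', q ≠ q' → Disjoint (Q q) (Q q'))
    (hQcover : ∀ k : Fin K, ∃ q, k ∈ Q q)
    (hQdiff : ∀ q q', q ≠ q' → ∀ k ∈ Q q, ∀ k' ∈ Q q', ¬ Unidentifiable P (ψ k) (ψ k')) :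
    ∃ (σ : Equiv.Perm (Fin K)) (U : ∀ q, Matrix ↥(Q q) ↥(Q q) ℝ),
      (∀ q, (U q)ᵀ * U q = 1 ∧ U q * (U q)ᵀ = 1) ∧
      ∀ (q : Fin Qn) (k : ↥(Q q)) (i : Fin N),
        g (σ (k : Fin K)) i = ∑ k' : ↥(Q q), ψ (k' : Fin K) i * U q k' k := by
  have hψli : LinearIndependent ℝ ψ :=
    linearIndependent_of_rank_sum_vecMulVec_self ψ (by rw [← hψ.1, hrank, Fintype.card_fin])
  obtain ⟨T, hT, hgT⟩ :=
    exists_mul_transpose_eq_one_of_sum_vecMulVec_eq hψli (hg.1.symm.trans hψ.1)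
  have hψT : of ψ = Tᵀ * of g := by
    rw [hgT, ← Matrix.mul_assoc, mul_eq_one_comm.mp hT, Matrix.one_mul]
  have hunid : ∀ {j k}, T j k ≠ 0 → Unidentifiable P (g j) (ψ k) :=
    (hψ.patchIndependent hreg).unidentifiable_of_ne_zero (hg.patchIndependent hreg) hgT hψT
  choose group hgroup using hQcover
  have hmem : ∀ q k, k ∈ Q q ↔ group k = q := fun q k =>
    ⟨fun hk => by_contra fun hne => Finset.disjoint_left.mp (hQdisj _ _ hne) (hgroup k) hk,
      fun h => h ▸ hgroup k⟩
  have hblock : ∀ j k k', T j k ≠ 0 → T j k' ≠ 0 → group k = group k' := fun _ k k' h h' =>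
    by_contra fun hne => hQdiff _ _ hne k (hgroup k) k' (hgroup k')
      fun m => (hunid h m).symm.trans (hunid h' m)
  obtain ⟨σ, hσ⟩ := exists_perm_rows_supported_on_fibers hT group hblock
  have hsupp : ∀ q (k : Q q) k', T (σ k) k' ≠ 0 → k' ∈ Q q := fun q k k' h =>
    (hmem q k').mpr ((hσ k k' h).trans ((hmem q k).mp k.2))
  refine ⟨σ, fun q => (T.submatrix (σ ∘ Subtype.val) Subtype.val)ᵀ, fun q => ?_,
    fun q k i => ?_⟩
  · simpa only [transpose_transpose] using
      submatrix_orthogonal_of_row_support hT (σ.injective.comp Subtype.val_injective) (hsupp q)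
  · rw [show g (σ k) i = (T * of ψ) (σ k) i from congrFun (congrFun hgT _) i,
      mul_apply_eq_sum_of_row_support _ (hsupp q k)]
    exact Finset.sum_congr rfl fun _ _ => mul_comm _ _

/-- Theorem 3.1 of the paper. Suppose `𝒫` is regular-sparse w.r.t. `A` and
`(ψ_1,...,ψ_K)`, `(g_1,...,g_K)` are two sets of intrinsic sparse modes of `A`. Partition
`{1,...,K}` into groups `Q_1,...,Q_Q` of pairwise unidentifiable modes, identifiable across
different groups. Then there exist a bijection `σ` of `{1,...,K}` and orthogonal matrices
`U_q ∈ O(n_q)` such that for each `q` the matrix with columns `(g_{σ(k)})_{k ∈ Q_q}` equals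
the matrix with columns `(ψ_k)_{k ∈ Q_q}` multiplied on the right by `U_q`. -/
theorem ism_unique_up_to_rotations_of_unidentifiable_groups
    {N M K : ℕ} (A : Matrix (Fin N) (Fin N) ℝ)
    (hA : A.PosSemidef) (hrank : A.rank = K)
    (P : Fin M → Finset (Fin N)) (hP : IsPartition P)
    (hreg : RegularSparse K A P)
    (ψ : Fin K → Fin N → ℝ) (hψ : IsISM A P ψ)
    (g : Fin K → Fin N → ℝ) (hg : IsISM A P g)
    (Qn : ℕ) (Q : Fin Qn → Finset (Fin K))
    (hQne : ∀ q, (Q q).Nonempty)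
    (hQdisj : ∀ q q', q ≠ q' → Disjoint (Q q) (Q q'))
    (hQcover : ∀ k : Fin K, ∃ q, k ∈ Q q)
    (hQsame : ∀ q, ∀ k ∈ Q q, ∀ k' ∈ Q q, Unidentifiable P (ψ k) (ψ k'))
    (hQdiff : ∀ q q', q ≠ q' → ∀ k ∈ Q q, ∀ k' ∈ Q q', ¬ Unidentifiable P (ψ k) (ψ k')) :
    ∃ (σ : Equiv.Perm (Fin K)) (U : ∀ q, Matrix ↥(Q q) ↥(Q q) ℝ),
      (∀ q, (U q)ᵀ * U q = 1 ∧ U q * (U q)ᵀ = 1) ∧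
      ∀ (q : Fin Qn) (k : ↥(Q q)) (i : Fin N),
        g (σ (k : Fin K)) i = ∑ k' : ↥(Q q), ψ (k' : Fin K) i * U q k' k :=
  ism_unique_up_to_rotations_of_unidentifiable_groups_general A hrank P hreg ψ hψ g hg Qn Q hQdisj
    hQcover hQdiff
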